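/- Let H be a finitely generated subgroup of a finitely generated group G. If there is a constant K such that μ_H^G(i, 2i) ≤ K for all i ∈ ℕ, then Δ_H^G(n) ⪯ n^{log₂ K}; i.e., the distortion of H in G is bounded by a polynomial. Concretely, Δ_H^G(2ⁿ) ≤ Kⁿ for all n, and Δ_H^G(n) ≤ (2n)^{log₂ K} for all n ≥ 1. -/

import Mathlib

variable {G : Type*} [Group G]

/-- `g` is a product of `k` elements of `A ∪ A⁻¹`. -/
def IsWord (A : Set G) (k : ℕ) (g : G) : Prop :=
  ∃ l : List G, l.length = k ∧ (∀ x ∈ l, x ∈ A ∨ x⁻¹ ∈ A) ∧ l.prod = g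

/-- Word length of `g` with respect to the generating set `A`. -/
noncomputable def wlen (A : Set G) (g : G) : ℕ :=
  sInf {k : ℕ | IsWord A k g}

/-- Distortion function `Δ_{H,Y}^{G,X}(n) = max { |h|_Y : h ∈ H, |h|_X ≤ n }`. -/
noncomputable def distortion (X Y : Set G) (H : Subgroup G) (n : ℕ) : ℕ :=
  sSup (wlen Y '' {g : G | g ∈ H ∧ wlen X g ≤ n})

/-- Lower distortion function `∇_{H,Y}^{G,X}(n) = min { |h|_Y : h ∈ H, |h|_X > n }`. -/
noncomputable def lowerDistortion (X Y : Set G) (H : Subgroup G) (n : ℕ) : ℕ :=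
  sInf (wlen Y '' {g : G | g ∈ H ∧ n < wlen X g})

/-- Generalized distortion `μ_H^{G,X}(m,n) = max { |h|_{Y_m} : h ∈ H, |h|_X ≤ n }`,
where `Y_m = { h ∈ H : |h|_X ≤ m }`. -/
noncomputable def genDistortion (X : Set G) (H : Subgroup G) (m n : ℕ) : ℕ :=
  sSup (wlen {h : G | h ∈ H ∧ wlen X h ≤ m} '' {g : G | g ∈ H ∧ wlen X g ≤ n})

/-! ### Auxiliary lemmas -/

lemma IsWord.inv {A : Set G} {k : ℕ} {g : G} (h : IsWord A k g) : IsWord A k g⁻¹ := by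
  obtain ⟨l, hlen, hmem, hprod⟩ := h
  refine ⟨(l.map fun x => x⁻¹).reverse, by simp [hlen], ?_, ?_⟩
  · intro x hx
    simp only [List.mem_reverse, List.mem_map] at hx
    obtain ⟨y, hy, rfl⟩ := hx
    rcases hmem y hy with h1 | h1
    · exact Or.inr (by simpa using h1)
    · exact Or.inl h1
  · rw [← List.prod_inv_reverse, hprod]

lemma IsWord.mul {A : Set G} {k m : ℕ} {g h : G} (hg : IsWord A k g) (hh : IsWord A m h) :
    IsWord A (k + m) (g * h) := by
  obtain ⟨l1, hl1, hm1, hp1⟩ := hg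
  obtain ⟨l2, hl2, hm2, hp2⟩ := hh
  refine ⟨l1 ++ l2, by simp [hl1, hl2], ?_, by simp [hp1, hp2]⟩
  intro x hx
  rcases List.mem_append.1 hx with hx | hx
  · exact hm1 x hx
  · exact hm2 x hx

lemma wlen_le_of_isWord {A : Set G} {k : ℕ} {g : G} (h : IsWord A k g) : wlen A g ≤ k :=
  Nat.sInf_le h

lemma isWord_wlen {A : Set G} {g : G} (h : ∃ k, IsWord A k g) : IsWord A (wlen A g) g :=
  Nat.sInf_mem h

lemma wlen_inv_le (A : Set G) (g : G) : wlen A g⁻¹ ≤ wlen A g := by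
  by_cases h : ∃ k, IsWord A k g
  · exact wlen_le_of_isWord (isWord_wlen h).inv
  · have h' : ¬ ∃ k, IsWord A k g⁻¹ := by
      rintro ⟨k, hk⟩
      exact h ⟨k, by simpa using hk.inv⟩
    have : {k : ℕ | IsWord A k g⁻¹} = ∅ := by
      ext k; simp only [Set.mem_setOf_eq, Set.mem_empty_iff_false, iff_false]
      exact fun hk => h' ⟨k, hk⟩
    simp [wlen, this]

lemma exists_isWord_of_mem_closure {A : Set G} {g : G} (h : g ∈ Subgroup.closure A) :
    ∃ k, IsWord A k g := by
  have h' : g ∈ (Subgroup.closure A).toSubmonoid := h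
  rw [Subgroup.closure_toSubmonoid] at h'
  obtain ⟨l, hl, hprod⟩ := Submonoid.exists_list_of_mem_closure h'
  refine ⟨l.length, l, rfl, ?_, hprod⟩
  intro x hx
  rcases hl x hx with hx' | hx'
  · exact Or.inl hx'
  · exact Or.inr (Set.mem_inv.1 hx')

/-- Words of bounded length over a finite set form a finite set. -/
lemma finite_words {A : Set G} (hA : A.Finite) :
    ∀ n : ℕ, {g : G | ∃ k ≤ n, IsWord A k g}.Finite := by
  intro n
  induction n with
  | zero =>
    refine Set.Finite.subset (Set.finite_singleton 1) ?_
    rintro g ⟨k, hk, l, hlen, -, hprod⟩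
    interval_cases k
    · rw [List.length_eq_zero_iff] at hlen
      simp [hlen] at hprod
      simp [← hprod]
  | succ n ih =>
    have hAi : (A ∪ A⁻¹).Finite := hA.union hA.inv
    refine Set.Finite.subset
      (ih.union (((hAi.prod ih).image (fun p : G × G => p.1 * p.2)))) ?_
    rintro g ⟨k, hk, l, hlen, hmem, hprod⟩
    rcases Nat.lt_or_ge k (n + 1) with hk' | hk'
    · exact Or.inl ⟨k, Nat.lt_succ_iff.1 hk', l, hlen, hmem, hprod⟩
    · have hkeq : k = n + 1 := le_antisymm hk hk'
      subst hkeq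
      match l, hlen with
      | x :: t, hlen =>
        refine Or.inr ⟨(x, t.prod), ⟨?_, ⟨t.length, by simp at hlen; omega, t, rfl,
          fun y hy => hmem y (List.mem_cons_of_mem x hy), rfl⟩⟩, by simpa using hprod⟩
        rcases hmem x List.mem_cons_self with hx | hx
        · exact Or.inl hx
        · exact Or.inr (Set.mem_inv.2 hx)

lemma finite_wlen_le {X : Set G} (hXfin : X.Finite) (hXgen : Subgroup.closure X = ⊤)
    (n : ℕ) : {g : G | wlen X g ≤ n}.Finite := by
  refine Set.Finite.subset (finite_words hXfin n) ?_
  intro g hg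
  have hex : ∃ k, IsWord X k g :=
    exists_isWord_of_mem_closure (by rw [hXgen]; trivial)
  exact ⟨wlen X g, hg, isWord_wlen hex⟩

/-- Concatenation bound: a product of a list of elements, each a word of length `≤ c`,
is a word of length `≤ l.length * c`. -/
lemma exists_isWord_prod {A : Set G} (c : ℕ) :
    ∀ l : List G, (∀ x ∈ l, ∃ k ≤ c, IsWord A k x) →
      ∃ k ≤ l.length * c, IsWord A k l.prod := by
  intro l
  induction l with
  | nil => exact fun _ => ⟨0, by simp, [], rfl, by simp, by simp⟩
  | cons x t ih =>
    intro hmem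
    obtain ⟨kx, hkx, hwx⟩ := hmem x List.mem_cons_self
    obtain ⟨kt, hkt, hwt⟩ := ih fun y hy => hmem y (List.mem_cons_of_mem x hy)
    refine ⟨kx + kt, ?_, by simpa using hwx.mul hwt⟩
    calc kx + kt ≤ c + t.length * c := Nat.add_le_add hkx hkt
    _ = (x :: t).length * c := by simp [Nat.succ_mul, Nat.add_comm]

/-- if `μ_H^G(i, 2i) ≤ K` for all `i`, then the distortion is polynomially
bounded: `Δ(2ⁿ) ≤ Kⁿ` for all `n` and `Δ(n) ≤ (2n)^(log₂ K)` for all `n ≥ 1`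
(taking `Y = Y₁`). -/
theorem distortion_poly_of_genDistortion_bounded {G : Type*} [Group G]
    (X : Set G) (H : Subgroup G)
    (hXfin : X.Finite) (hXgen : Subgroup.closure X = ⊤)
    (hYgen : Subgroup.closure {h : G | h ∈ H ∧ wlen X h ≤ 1} = H)
    (K : ℕ) (hK : ∀ i : ℕ, genDistortion X H i (2 * i) ≤ K) :
    (∀ n : ℕ, distortion X {h : G | h ∈ H ∧ wlen X h ≤ 1} H (2 ^ n) ≤ K ^ n) ∧
    (∀ n : ℕ, 1 ≤ n →
      (distortion X {h : G | h ∈ H ∧ wlen X h ≤ 1} H n : ℝ) ≤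
        (2 * n : ℝ) ^ (Real.logb 2 K)) := by
  set Y₁ : Set G := {h : G | h ∈ H ∧ wlen X h ≤ 1} with hY₁
  -- key pointwise claim
  have main : ∀ n : ℕ, ∀ h : G, h ∈ H → wlen X h ≤ 2 ^ n →
      ∃ k ≤ K ^ n, IsWord Y₁ k h := by
    intro n
    induction n with
    | zero =>
      intro h hH hle
      exact ⟨1, le_refl _, [h], rfl, fun x hx => by
        simp only [List.mem_singleton] at hx; subst hx
        exact Or.inl ⟨hH, by simpa using hle⟩, by simp⟩
    | succ n ih =>
      intro h hH hle
      set Yi : Set G := {g : G | g ∈ H ∧ wlen X g ≤ 2 ^ n} with hYi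
      -- h is a word over Yi
      have hsub : Y₁ ⊆ Yi := fun x hx =>
        ⟨hx.1, hx.2.trans (Nat.one_le_two_pow)⟩
      have hex : ∃ k, IsWord Yi k h := by
        refine exists_isWord_of_mem_closure (A := Yi) ?_
        have : h ∈ Subgroup.closure Y₁ := by rw [hYgen]; exact hH
        exact Subgroup.closure_mono hsub this
      -- wlen Yi h ≤ K
      have hfin : ({g : G | g ∈ H ∧ wlen X g ≤ 2 * 2 ^ n}).Finite :=
        Set.Finite.subset (finite_wlen_le hXfin hXgen (2 * 2 ^ n)) fun g hg => hg.2
      have hmemS : h ∈ {g : G | g ∈ H ∧ wlen X g ≤ 2 * 2 ^ n} :=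
        ⟨hH, by rw [pow_succ] at hle; omega⟩
      have hwK : wlen Yi h ≤ K := by
        have hb : BddAbove (wlen Yi '' {g : G | g ∈ H ∧ wlen X g ≤ 2 * 2 ^ n}) :=
          (hfin.image _).bddAbove
        have h1 : wlen Yi h ≤ genDistortion X H (2 ^ n) (2 * 2 ^ n) :=
          le_csSup hb ⟨h, hmemS, rfl⟩
        exact h1.trans (hK (2 ^ n))
      -- get the word
      obtain ⟨l, hlen, hmeml, hprod⟩ := isWord_wlen hex
      have hsym : ∀ x ∈ l, x ∈ Yi := by
        intro x hx
        rcases hmeml x hx with hx' | hx'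
        · exact hx'
        · exact ⟨by simpa using H.inv_mem hx'.1,
            le_trans (by simpa using wlen_inv_le X x⁻¹) hx'.2⟩
      obtain ⟨k, hkle, hkw⟩ := exists_isWord_prod (K ^ n) l
        (fun x hx => ih x (hsym x hx).1 (hsym x hx).2)
      refine ⟨k, ?_, hprod ▸ hkw⟩
      calc k ≤ l.length * K ^ n := hkle
      _ ≤ K * K ^ n := Nat.mul_le_mul_right _ (hlen ▸ hwK)
      _ = K ^ (n + 1) := by ring
  have main' : ∀ n : ℕ, ∀ h : G, h ∈ H → wlen X h ≤ 2 ^ n → wlen Y₁ h ≤ K ^ n := by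
    intro n h hH hle
    obtain ⟨k, hk, hw⟩ := main n h hH hle
    exact (wlen_le_of_isWord hw).trans hk
  have part1 : ∀ n : ℕ, distortion X Y₁ H (2 ^ n) ≤ K ^ n := by
    intro n
    refine csSup_le' ?_
    rintro _ ⟨g, ⟨hgH, hgle⟩, rfl⟩
    exact main' n g hgH hgle
  refine ⟨part1, ?_⟩
  intro n hn
  set m := Nat.clog 2 n with hm
  have h2m : n ≤ 2 ^ m := Nat.le_pow_clog (by norm_num) n
  have hd : distortion X Y₁ H n ≤ K ^ m := by
    refine csSup_le' ?_
    rintro _ ⟨g, ⟨hgH, hgle⟩, rfl⟩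
    exact main' m g hgH (hgle.trans h2m)
  have h2m2n : 2 ^ m ≤ 2 * n := by
    rcases Nat.lt_or_ge n 2 with hn2 | hn2
    · interval_cases n
      simp [hm, Nat.clog_one_right]
    · have hmpos : 0 < m := Nat.clog_pos (by norm_num) hn2
      have hlt : 2 ^ (m - 1) < n := Nat.pow_pred_clog_lt_self (by norm_num) hn2
      have : 2 ^ m = 2 * 2 ^ (m - 1) := by
        conv_lhs => rw [show m = (m - 1) + 1 by omega]
        ring
      omega
  rcases Nat.eq_zero_or_pos K with hK0 | hKpos
  · subst hK0
    have : distortion X Y₁ H n ≤ 1 := hd.trans (by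
      rcases Nat.eq_zero_or_pos m with h | h
      · simp [h]
      · simp [Nat.zero_pow h])
    have h1 : (distortion X Y₁ H n : ℝ) ≤ 1 := by exact_mod_cast this
    simpa [Real.logb_zero, Real.rpow_zero] using h1
  · have hK1 : (1 : ℝ) ≤ (K : ℝ) := by exact_mod_cast hKpos
    have hlogb : 0 ≤ Real.logb 2 K := Real.logb_nonneg (by norm_num) hK1
    have hKeq : (2 : ℝ) ^ (Real.logb 2 (K : ℝ)) = (K : ℝ) :=
      Real.rpow_logb (by norm_num) (by norm_num) (by exact_mod_cast hKpos)
    have step1 : (distortion X Y₁ H n : ℝ) ≤ (K : ℝ) ^ m := by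
      exact_mod_cast hd
    have step2 : (K : ℝ) ^ m = ((2 : ℝ) ^ (m : ℕ)) ^ (Real.logb 2 K) := by
      conv_lhs => rw [← hKeq]
      rw [← Real.rpow_natCast ((2:ℝ) ^ Real.logb 2 (K:ℝ)) m,
        ← Real.rpow_mul (by norm_num), mul_comm (Real.logb 2 (K:ℝ)) (m:ℝ),
        Real.rpow_mul (by norm_num), Real.rpow_natCast]
    have step3 : ((2 : ℝ) ^ (m : ℕ)) ^ (Real.logb 2 K) ≤ (2 * n : ℝ) ^ (Real.logb 2 K) := by
      refine Real.rpow_le_rpow (by positivity) ?_ hlogb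
      have : ((2 ^ m : ℕ) : ℝ) ≤ ((2 * n : ℕ) : ℝ) := by exact_mod_cast h2m2n
      push_cast at this
      convert this using 2
    calc (distortion X Y₁ H n : ℝ) ≤ (K : ℝ) ^ m := step1
    _ = ((2 : ℝ) ^ (m : ℕ)) ^ (Real.logb 2 K) := step2
    _ ≤ (2 * n : ℝ) ^ (Real.logb 2 K) := step3
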